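/- arXiv:2511.22113 — 3 statements merged into one kernel-verified Lean document; each statement's English description precedes it below -/
import Mathlib

section
/- Let X ⊆ P^n be a finite set of points and Y ⊆ X with |Y| = |X| − 1. Let α be the initial degree of the image I_{Y/X} of the vanishing ideal of Y in R = P/I_X. Then HF_Y(i) = HF_X(i) for i < α and HF_Y(i) = HF_X(i) − 1 for i ≥ α. -/
open MvPolynomial Module

variable {K : Type*} [Field K] [CharZero K] {n : ℕ}

/-- Projective `n`-space over `K`, as the projectivization of `K^{n+1}`. -/
abbrev Proj (K : Type*) [Field K] (n : ℕ) := Projectivization K (Fin (n+1) → K)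

/-- A polynomial vanishes at a projective point if it vanishes at every representative. -/
def vanishesAt (f : MvPolynomial (Fin (n+1)) K) (p : Proj K n) : Prop :=
  ∀ (v : Fin (n+1) → K) (hv : v ≠ 0), Projectivization.mk K v hv = p →
    MvPolynomial.eval v f = 0

/-- `X` has the Cayley–Bacharach property of degree `r`: every hypersurface of degree `r`
containing all but one point of `X` contains all of `X`. -/
def hasCBP (X : Finset (Proj K n)) (r : ℕ) : Prop :=
  ∀ p ∈ X, ∀ f : MvPolynomial (Fin (n+1)) K, f.IsHomogeneous r →
    (∀ q ∈ X, q ≠ p → vanishesAt f q) → vanishesAt f p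

/-- The set of projective points lying on the linear subspace given by a submodule `W`. -/
def projPoints (W : Submodule K (Fin (n+1) → K)) : Set (Proj K n) :=
  {p | p.submodule ≤ W}

/-- Evaluation of degree-`i` forms at (representatives of) the points of `X`. -/
noncomputable def evalMap (X : Finset (Proj K n)) (i : ℕ) :
    (MvPolynomial.homogeneousSubmodule (Fin (n+1)) K i) →ₗ[K] (X → K) :=
  (LinearMap.pi fun p : X =>
    (MvPolynomial.aeval (Projectivization.rep (p : Proj K n))).toLinearMap).comp
    (Submodule.subtype _)

/-- The Hilbert function of `X`: the dimension of the degree-`i` piece of the homogeneous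
coordinate ring of `X`, computed as the rank of the evaluation map. -/
noncomputable def HF (X : Finset (Proj K n)) (i : ℕ) : ℕ :=
  Module.finrank K (LinearMap.range (evalMap X i))

/-- The Hilbert function extended to integers (zero in negative degrees). -/
noncomputable def hfZ (X : Finset (Proj K n)) (i : ℤ) : ℕ :=
  if 0 ≤ i then HF X i.toNat else 0

/-- The regularity index of `X`: the least degree where the Hilbert function reaches `|X|`. -/
noncomputable def regIndex (X : Finset (Proj K n)) : ℕ :=
  sInf {i | HF X i = X.card}

/-- The initial degree `α_{Y/X}` of `I_{Y/X} = I_Y / I_X ⊆ R = P/I_X`: the least degree of a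
form vanishing on `Y` but not on all of `X`. -/
noncomputable def alphaDeg (X Y : Finset (Proj K n)) : ℕ :=
  sInf {k | ∃ f : MvPolynomial (Fin (n+1)) K, f.IsHomogeneous k ∧
    (∀ q ∈ Y, vanishesAt f q) ∧ ∃ p ∈ X, ¬ vanishesAt f p}

/-- The points of `X` lying in a set `S`. -/
noncomputable def interF (X : Finset (Proj K n)) (S : Set (Proj K n)) : Finset (Proj K n) :=
  @Finset.filter _ (fun p => p ∈ S) (Classical.decPred _) X

/-- The points of `X` not lying in a set `S`. -/
noncomputable def diffF (X : Finset (Proj K n)) (S : Set (Proj K n)) : Finset (Proj K n) :=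
  @Finset.filter _ (fun p => p ∉ S) (Classical.decPred _) X

/-- A plane configuration: a union of `k` distinct positive-dimensional linear subspaces
of `ℙ^n` (a projective linear subspace is positive-dimensional when its defining submodule
has vector-space dimension at least `2`). -/
structure PlaneConfig (K : Type*) [Field K] (n : ℕ) where
  k : ℕ
  planes : Fin k → Submodule K (Fin (n+1) → K)
  injective : Function.Injective planes
  posdim : ∀ i, 2 ≤ Module.finrank K (planes i)

/-- The set of points of a plane configuration. -/
def PlaneConfig.points (P : PlaneConfig K n) : Set (Proj K n) :=
  ⋃ i, projPoints (P.planes i)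

/-- The dimension of a plane configuration: the sum of the (projective) dimensions of
its components. -/
noncomputable def PlaneConfig.dim (P : PlaneConfig K n) : ℕ :=
  ∑ i, (Module.finrank K (P.planes i) - 1)

/-- A plane configuration is skew if its components are pairwise disjoint. -/
def PlaneConfig.isSkew (P : PlaneConfig K n) : Prop :=
  ∀ i j, i ≠ j → P.planes i ⊓ P.planes j = ⊥

/-- A plane configuration is split if each component is disjoint from the span of the
other components. -/
def PlaneConfig.isSplit (P : PlaneConfig K n) : Prop :=
  ∀ i, P.planes i ⊓ (⨆ j ∈ ({i}ᶜ : Set (Fin P.k)), P.planes j) = ⊥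

/-- `Z` lies on a plane configuration of dimension `d`. -/
def liesOnConfig (Z : Finset (Proj K n)) (d : ℕ) : Prop :=
  ∃ P : PlaneConfig K n, P.dim = d ∧ ↑Z ⊆ P.points

/-- The Levinson–Ullery conjecture for the pair `(d, r)`: any finite set of points with
`CBP(r)` and at most `(d+1)r + 1` points lies on a plane configuration of dimension `d`. -/
def LUConj (K : Type*) [Field K] [CharZero K] (d r : ℕ) : Prop :=
  ∀ (m : ℕ) (Z : Finset (Proj K m)), hasCBP Z r → Z.card ≤ (d+1)*r + 1 → liesOnConfig Z d


section Aux
set_option linter.unusedSectionVars false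

variable {K : Type*} [Field K] [CharZero K] {n : ℕ}

lemma aeval_eq_eval' (v : Fin (n+1) → K) (f : MvPolynomial (Fin (n+1)) K) :
    MvPolynomial.aeval v f = MvPolynomial.eval v f := by
  rw [MvPolynomial.aeval_def, Algebra.algebraMap_self]
  rfl

lemma eval_smul_homog {f : MvPolynomial (Fin (n+1)) K} {m : ℕ} (hf : f.IsHomogeneous m)
    (c : K) (v : Fin (n+1) → K) :
    MvPolynomial.eval (c • v) f = c ^ m * MvPolynomial.eval v f := by
  rw [MvPolynomial.eval_eq, MvPolynomial.eval_eq, Finset.mul_sum]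
  refine Finset.sum_congr rfl fun d hd => ?_
  have hdeg : ∑ i ∈ d.support, d i = m := by
    have := hf (MvPolynomial.mem_support_iff.mp hd)
    simpa [Finsupp.weight_apply, Finsupp.sum] using this
  calc f.coeff d * ∏ i ∈ d.support, (c • v) i ^ d i
      = f.coeff d * ((∏ i ∈ d.support, c ^ d i) * ∏ i ∈ d.support, v i ^ d i) := by
        simp [mul_pow, Finset.prod_mul_distrib]
    _ = c ^ m * (f.coeff d * ∏ i ∈ d.support, v i ^ d i) := by
        rw [Finset.prod_pow_eq_pow_sum, hdeg]; ring

lemma vanishes_iff {f : MvPolynomial (Fin (n+1)) K} {m : ℕ} (hf : f.IsHomogeneous m)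
    (p : Proj K n) : vanishesAt f p ↔ MvPolynomial.eval p.rep f = 0 := by
  constructor
  · intro h
    exact h p.rep p.rep_nonzero (Projectivization.mk_rep p)
  · intro h v hv hmk
    have hmk2 : Projectivization.mk K v hv
        = Projectivization.mk K p.rep p.rep_nonzero := by
      rw [hmk, Projectivization.mk_rep]
    obtain ⟨a, ha⟩ := (Projectivization.mk_eq_mk_iff K v p.rep hv p.rep_nonzero).mp hmk2
    rw [← ha, Units.smul_def, eval_smul_homog hf, h, mul_zero]

lemma exists_sep {p q : Proj K n} (hpq : p ≠ q) :
    ∃ f : MvPolynomial (Fin (n+1)) K, f.IsHomogeneous 1 ∧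
      MvPolynomial.eval q.rep f = 0 ∧ MvPolynomial.eval p.rep f ≠ 0 := by
  by_contra hcon
  push_neg at hcon
  obtain ⟨j, hj⟩ : ∃ j, q.rep j ≠ 0 := by
    by_contra h
    push_neg at h
    exact q.rep_nonzero (funext h)
  have key : ∀ k, p.rep k * q.rep j = p.rep j * q.rep k := by
    intro k
    set f : MvPolynomial (Fin (n+1)) K :=
      MvPolynomial.C (q.rep j) * MvPolynomial.X k
        - MvPolynomial.C (q.rep k) * MvPolynomial.X j with hfdef
    have hf : f.IsHomogeneous 1 :=
      (MvPolynomial.isHomogeneous_C_mul_X _ _).sub (MvPolynomial.isHomogeneous_C_mul_X _ _)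
    have h0 : MvPolynomial.eval q.rep f = 0 := by
      simp only [hfdef, map_sub, map_mul, MvPolynomial.eval_C, MvPolynomial.eval_X]
      ring
    have h1 := hcon f hf h0
    simp only [hfdef, map_sub, map_mul, MvPolynomial.eval_C, MvPolynomial.eval_X,
      not_not] at h1
    have h2 : q.rep j * p.rep k - q.rep k * p.rep j = 0 := h1
    linear_combination h2
  have hv : p.rep = (p.rep j / q.rep j) • q.rep := by
    funext k
    rw [Pi.smul_apply, smul_eq_mul]
    field_simp
    linear_combination key k
  apply hpq
  rw [← Projectivization.mk_rep p, ← Projectivization.mk_rep q,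
    Projectivization.mk_eq_mk_iff']
  exact ⟨_, hv.symm⟩

lemma exists_witness (Y : Finset (Proj K n)) (p : Proj K n) (hp : p ∉ Y) :
    ∃ f : MvPolynomial (Fin (n+1)) K, f.IsHomogeneous Y.card ∧
      (∀ q ∈ Y, MvPolynomial.eval q.rep f = 0) ∧ MvPolynomial.eval p.rep f ≠ 0 := by
  have hsep : ∀ q : {x // x ∈ Y}, p ≠ (q : Proj K n) := by
    rintro ⟨q, hq⟩ rfl
    exact hp hq
  choose L hL1 hL2 hL3 using fun q : {x // x ∈ Y} => exists_sep (hsep q)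
  refine ⟨∏ q ∈ Y.attach, L q, ?_, ?_, ?_⟩
  · have := MvPolynomial.IsHomogeneous.prod Y.attach L (fun _ => 1) (fun q _ => hL1 q)
    simpa using this
  · intro q hq
    rw [map_prod]
    exact Finset.prod_eq_zero (Finset.mem_attach _ ⟨q, hq⟩) (hL2 ⟨q, hq⟩)
  · rw [map_prod]
    exact Finset.prod_ne_zero_iff.mpr fun q _ => hL3 q

lemma boost {f : MvPolynomial (Fin (n+1)) K} {m i : ℕ} (hm : m ≤ i) (hf : f.IsHomogeneous m)
    (p : Proj K n) (Y : Finset (Proj K n))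
    (h0 : ∀ q ∈ Y, MvPolynomial.eval q.rep f = 0)
    (hp : MvPolynomial.eval p.rep f ≠ 0) :
    ∃ g : MvPolynomial (Fin (n+1)) K, g.IsHomogeneous i ∧
      (∀ q ∈ Y, MvPolynomial.eval q.rep g = 0) ∧ MvPolynomial.eval p.rep g ≠ 0 := by
  obtain ⟨j, hj⟩ : ∃ j, p.rep j ≠ 0 := by
    by_contra h
    push_neg at h
    exact p.rep_nonzero (funext h)
  refine ⟨MvPolynomial.X j ^ (i - m) * f, ?_, ?_, ?_⟩
  · have := (MvPolynomial.isHomogeneous_X_pow (R := K) j (i - m)).mul hf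
    rwa [Nat.sub_add_cancel hm] at this
  · intro q hq
    simp [h0 q hq]
  · simp only [map_mul, map_pow, MvPolynomial.eval_X]
    exact mul_ne_zero (pow_ne_zero _ hj) hp

lemma evalMap_apply (X : Finset (Proj K n)) (i : ℕ)
    (f : MvPolynomial.homogeneousSubmodule (Fin (n+1)) K i) (p : {x // x ∈ X}) :
    evalMap X i f p
      = MvPolynomial.eval (Projectivization.rep (p : Proj K n)) (f : MvPolynomial (Fin (n+1)) K) := by
  simp [evalMap, aeval_eq_eval']

end Aux

set_option synthInstance.maxHeartbeats 1000000 in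
/-- For `Y ⊆ X` with `|Y| = |X| − 1` and `α = α_{Y/X}` the initial degree of
`I_{Y/X}`, we have `HF_Y(i) = HF_X(i)` for `i < α` and `HF_Y(i) = HF_X(i) − 1` for `i ≥ α`. -/
theorem stmt2 (X Y : Finset (Proj K n)) (hYX : Y ⊆ X) (hcard : Y.card + 1 = X.card) :
    (∀ i : ℕ, i < alphaDeg X Y → HF Y i = HF X i) ∧
    (∀ i : ℕ, alphaDeg X Y ≤ i → HF Y i + 1 = HF X i) := by
  classical
  -- the extra point p₀
  have hsd : (X \ Y).card = 1 := by rw [Finset.card_sdiff_of_subset hYX]; omega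
  obtain ⟨p₀, hp₀⟩ := Finset.card_eq_one.mp hsd
  have hp₀mem : p₀ ∈ X \ Y := hp₀ ▸ Finset.mem_singleton_self p₀
  have hp₀X : p₀ ∈ X := (Finset.mem_sdiff.mp hp₀mem).1
  have hp₀Y : p₀ ∉ Y := (Finset.mem_sdiff.mp hp₀mem).2
  have hmem : ∀ p ∈ X, p ∉ Y → p = p₀ := fun p hp hpY =>
    Finset.mem_singleton.mp (hp₀ ▸ Finset.mem_sdiff.mpr ⟨hp, hpY⟩)
  set S : Set ℕ := {k | ∃ f : MvPolynomial (Fin (n+1)) K, f.IsHomogeneous k ∧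
    (∀ q ∈ Y, vanishesAt f q) ∧ ∃ p ∈ X, ¬ vanishesAt f p} with hSdef
  have halpha : alphaDeg X Y = sInf S := rfl
  have hmemS : ∀ k, k ∈ S ↔ ∃ f : MvPolynomial (Fin (n+1)) K, f.IsHomogeneous k ∧
      (∀ q ∈ Y, MvPolynomial.eval q.rep f = 0) ∧ MvPolynomial.eval p₀.rep f ≠ 0 := by
    intro k
    constructor
    · rintro ⟨f, hf, hY, p, hpX, hp⟩
      have hpY : p ∉ Y := fun h => hp (hY p h)
      have hpp : p = p₀ := hmem p hpX hpY
      subst hpp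
      exact ⟨f, hf, fun q hq => (vanishes_iff hf q).mp (hY q hq),
        fun h0 => hp ((vanishes_iff hf p).mpr h0)⟩
    · rintro ⟨f, hf, hY, hp⟩
      exact ⟨f, hf, fun q hq => (vanishes_iff hf q).mpr (hY q hq), p₀, hp₀X,
        fun h => hp ((vanishes_iff hf p₀).mp h)⟩
  have hSne : S.Nonempty := by
    obtain ⟨f, hf, h0, hp⟩ := exists_witness Y p₀ hp₀Y
    exact ⟨Y.card, (hmemS _).mpr ⟨f, hf, h0, hp⟩⟩
  -- linear algebra setup
  set ι : {x // x ∈ Y} → {x // x ∈ X} := fun q => ⟨q.1, hYX q.2⟩ with hιdef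
  have hι : Function.Injective ι := by
    intro a b h
    exact Subtype.ext (congrArg (fun x : {x // x ∈ X} => x.1) h)
  set π : ({x // x ∈ X} → K) →ₗ[K] ({x // x ∈ Y} → K) := LinearMap.funLeft K K ι with hπdef
  have hcomp : ∀ i, evalMap Y i = π.comp (evalMap X i) := by
    intro i
    refine LinearMap.ext fun f => funext fun q => ?_
    rfl
  have hrange : ∀ i, LinearMap.range (evalMap Y i)
      = (LinearMap.range (evalMap X i)).map π := by
    intro i
    rw [hcomp i, LinearMap.range_comp]
  -- rank identity
  have hrank : ∀ i : ℕ, HF X i = HF Y i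
      + finrank K ↥(LinearMap.ker π ⊓ LinearMap.range (evalMap X i)) := by
    intro i
    set V := LinearMap.range (evalMap X i) with hVdef
    haveI : FiniteDimensional K ({x // x ∈ X} → K) := inferInstance
    haveI : Module.Finite K V := inferInstance
    have h1 := LinearMap.finrank_range_add_finrank_ker (π.comp V.subtype)
    have h2 : LinearMap.range (π.comp V.subtype) = V.map π := by
      rw [LinearMap.range_comp, Submodule.range_subtype]
    have h3 : LinearMap.ker (π.comp V.subtype)
        = Submodule.comap V.subtype (LinearMap.ker π ⊓ V) := by
      rw [LinearMap.ker_comp, Submodule.comap_inf, Submodule.comap_subtype_self, inf_top_eq]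
    have h4 : finrank K ↥(Submodule.comap V.subtype (LinearMap.ker π ⊓ V))
        = finrank K ↥(LinearMap.ker π ⊓ V) :=
      (Submodule.comapSubtypeEquivOfLe inf_le_right).finrank_eq
    rw [h2, h3, h4] at h1
    have hHFX : HF X i = finrank K V := rfl
    have hHFY : HF Y i = finrank K ↥(V.map π) := by rw [HF, hrange i]
    omega
  -- kernel of π has dimension 1
  have hker1 : finrank K ↥(LinearMap.ker π) = 1 := by
    have hsurj : Function.Surjective π := LinearMap.funLeft_surjective_of_injective K K ι hι
    have h1 := LinearMap.finrank_range_add_finrank_ker π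
    rw [LinearMap.range_eq_top.mpr hsurj, finrank_top] at h1
    have hX : finrank K ({x // x ∈ X} → K) = X.card := by
      rw [Module.finrank_pi]; exact Fintype.card_coe X
    have hY : finrank K ({x // x ∈ Y} → K) = Y.card := by
      rw [Module.finrank_pi]; exact Fintype.card_coe Y
    rw [hX, hY] at h1
    omega
  constructor
  · intro i hiα
    have hV0 : LinearMap.ker π ⊓ LinearMap.range (evalMap X i) = ⊥ := by
      rw [eq_bot_iff]
      rintro g ⟨hgk, hgr⟩
      obtain ⟨f, rfl⟩ := hgr
      have hfh : (f : MvPolynomial (Fin (n+1)) K).IsHomogeneous i :=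
        (MvPolynomial.mem_homogeneousSubmodule _ _).mp f.2
      have hYval : ∀ q ∈ Y, MvPolynomial.eval q.rep (f : MvPolynomial (Fin (n+1)) K) = 0 := by
        intro q hq
        have h := congrFun (LinearMap.mem_ker.mp hgk) ⟨q, hq⟩
        rw [hπdef] at h
        rw [← evalMap_apply X i f (ι ⟨q, hq⟩)]
        exact h
      have hp0 : MvPolynomial.eval p₀.rep (f : MvPolynomial (Fin (n+1)) K) = 0 := by
        by_contra hne
        have hiS : i ∈ S := (hmemS i).mpr ⟨f, hfh, hYval, hne⟩
        have := Nat.sInf_le hiS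
        omega
      have hzero : evalMap X i f = 0 := by
        funext p
        rw [evalMap_apply]
        by_cases hpY : (p : Proj K n) ∈ Y
        · exact hYval _ hpY
        · have : (p : Proj K n) = p₀ := hmem _ p.2 hpY
          rw [this]; exact hp0
      rw [hzero]
      exact Submodule.zero_mem ⊥
    have := hrank i
    rw [hV0] at this
    simp only [finrank_bot] at this
    omega
  · intro i hiα
    have hαS : sInf S ∈ S := Nat.sInf_mem hSne
    obtain ⟨f, hf, hY0, hp0⟩ := (hmemS _).mp hαS
    have hm : sInf S ≤ i := by omega
    obtain ⟨g, hg, hgY, hgp⟩ := boost hm hf p₀ Y hY0 hp0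
    set w := evalMap X i ⟨g, (MvPolynomial.mem_homogeneousSubmodule _ _).mpr hg⟩ with hwdef
    have hwk : π w = 0 := by
      funext q
      have hq : π w q = w (ι q) := rfl
      rw [hq, hwdef, evalMap_apply]
      exact hgY _ q.2
    have hwmem : w ∈ LinearMap.ker π ⊓ LinearMap.range (evalMap X i) :=
      Submodule.mem_inf.mpr ⟨LinearMap.mem_ker.mpr hwk, ⟨_, rfl⟩⟩
    have hwne : w ≠ 0 := by
      intro h0
      have h := congrFun h0 ⟨p₀, hp₀X⟩
      rw [hwdef, evalMap_apply] at h
      exact hgp h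
    haveI : FiniteDimensional K ({x // x ∈ X} → K) := inferInstance
    have hfr : finrank K ↥(LinearMap.ker π ⊓ LinearMap.range (evalMap X i)) = 1 := by
      have hle : finrank K ↥(LinearMap.ker π ⊓ LinearMap.range (evalMap X i))
          ≤ finrank K ↥(LinearMap.ker π) := Submodule.finrank_mono inf_le_left
      have hne : finrank K ↥(LinearMap.ker π ⊓ LinearMap.range (evalMap X i)) ≠ 0 := by
        intro h0
        have hbot := Submodule.finrank_eq_zero.mp h0
        rw [hbot] at hwmem
        exact hwne (Submodule.mem_bot K |>.mp hwmem)
      omega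
    have := hrank i
    rw [hfr] at this
    omega
end

section
/- Let X ⊆ P^n be a finite set of points and Y ⊆ X with |Y| = |X| − 1. If f is a nonzero homogeneous element of I_{Y/X} of minimal degree α = α_{Y/X}, and x_0 is a non-zerodivisor linear form in R = P/I_X, then for every i ≥ 0 the graded piece (I_{Y/X})_{α+i} equals K·x_0^i·f, i.e. it is one-dimensional spanned by x_0^i f. -/
open MvPolynomial Module

variable {K : Type*} [Field K] [CharZero K] {n : ℕ}

lemma eval_smul_isHomogeneous {d : ℕ} {f : MvPolynomial (Fin (n+1)) K}
    (hf : f.IsHomogeneous d) (a : K) (v : Fin (n+1) → K) :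
    MvPolynomial.eval (a • v) f = a ^ d * MvPolynomial.eval v f := by
  rw [MvPolynomial.eval_eq', MvPolynomial.eval_eq', Finset.mul_sum]
  refine Finset.sum_congr rfl fun m hm => ?_
  have hdeg : ∑ i, m i = d := by
    have h1 : Finsupp.weight (1 : Fin (n+1) → ℕ) m = d := hf (MvPolynomial.mem_support_iff.mp hm)
    rw [← h1, show (1 : Fin (n+1) → ℕ) = fun _ => 1 from rfl, ← Finsupp.degree_eq_weight_one, Finsupp.degree]
    exact (Finset.sum_subset (Finset.subset_univ _)
      (fun i _ hi => Finsupp.notMem_support_iff.mp hi)).symm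
  calc MvPolynomial.coeff m f * ∏ i, (a • v) i ^ m i
      = MvPolynomial.coeff m f * ((∏ i, a ^ m i) * ∏ i, v i ^ m i) := by
        rw [← Finset.prod_mul_distrib]; simp [mul_pow]
    _ = a ^ d * (MvPolynomial.coeff m f * ∏ i, v i ^ m i) := by
        rw [Finset.prod_pow_eq_pow_sum, hdeg]; ring

lemma vanishesAt_of_eval_rep {d : ℕ} {f : MvPolynomial (Fin (n+1)) K}
    (hf : f.IsHomogeneous d) (p : Proj K n)
    (h : MvPolynomial.eval p.rep f = 0) : vanishesAt f p := by
  intro v hv hmk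
  rw [← p.mk_rep, Projectivization.mk_eq_mk_iff] at hmk
  obtain ⟨a, rfl⟩ := hmk
  rw [Units.smul_def, eval_smul_isHomogeneous hf, h, mul_zero]

/-- If `f` is a minimal separator of `Y` in `X` (a nonzero homogeneous element
of `I_{Y/X}` of minimal degree `α = α_{Y/X}`), and `ℓ` is a linear form whose image `x₀` in
`R = P/I_X` is a non-zerodivisor, then for every `i ≥ 0` the graded piece `(I_{Y/X})_{α+i}`
equals `K·x₀^i·f`: the class of `ℓ^i f` is nonzero in `R`, and every form of degree `α + i`
vanishing on `Y` is congruent modulo `I_X` to a scalar multiple of `ℓ^i f`. -/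
theorem stmt4 (X Y : Finset (Proj K n)) (hYX : Y ⊆ X) (hcard : Y.card + 1 = X.card)
    (ℓ : MvPolynomial (Fin (n+1)) K) (hℓ : ℓ.IsHomogeneous 1)
    (hnzd : ∀ g : MvPolynomial (Fin (n+1)) K,
      (∀ p ∈ X, vanishesAt (ℓ * g) p) → ∀ p ∈ X, vanishesAt g p)
    (f : MvPolynomial (Fin (n+1)) K) (hf : f.IsHomogeneous (alphaDeg X Y))
    (hfY : ∀ q ∈ Y, vanishesAt f q) (hfX : ∃ p ∈ X, ¬ vanishesAt f p)
    (i : ℕ) :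
    (∃ p ∈ X, ¬ vanishesAt (ℓ ^ i * f) p) ∧
    (∀ g : MvPolynomial (Fin (n+1)) K, g.IsHomogeneous (alphaDeg X Y + i) →
      (∀ q ∈ Y, vanishesAt g q) →
      ∃ c : K, ∀ p ∈ X, vanishesAt (g - c • (ℓ ^ i * f)) p) := by
  classical
  set α := alphaDeg X Y with hα
  -- the candidate separator in degree α + i
  set h : MvPolynomial (Fin (n+1)) K := ℓ ^ i * f with hh
  have hhom : h.IsHomogeneous (α + i) := by
    have := (hℓ.pow i).mul hf
    simpa [one_mul, add_comm] using this
  -- h vanishes on Y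
  have hhY : ∀ q ∈ Y, vanishesAt h q := by
    intro q hq v hv hmk
    have := hfY q hq v hv hmk
    simp [hh, this]
  -- Part 1, by induction on i
  have part1 : ∀ j : ℕ, ∃ p ∈ X, ¬ vanishesAt (ℓ ^ j * f) p := by
    intro j
    induction j with
    | zero => simpa using hfX
    | succ k ih =>
      by_contra hcon
      push_neg at hcon
      obtain ⟨p, hpX, hp⟩ := ih
      refine hp (hnzd (ℓ ^ k * f) ?_ p hpX)
      intro q hqX
      have := hcon q hqX
      have heq : ℓ ^ (k + 1) * f = ℓ * (ℓ ^ k * f) := by ring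
      rwa [heq] at this
  refine ⟨part1 i, ?_⟩
  -- the extra point p₀
  have hsd : (X \ Y).card = 1 := by
    rw [Finset.card_sdiff_of_subset hYX]; omega
  obtain ⟨p₀, hp₀⟩ := Finset.card_eq_one.mp hsd
  have hp₀X : p₀ ∈ X := (Finset.mem_sdiff.mp (hp₀ ▸ Finset.mem_singleton_self p₀)).1
  have hXmem : ∀ q ∈ X, q = p₀ ∨ q ∈ Y := by
    intro q hq
    by_cases hqY : q ∈ Y
    · exact Or.inr hqY
    · left
      have : q ∈ X \ Y := Finset.mem_sdiff.mpr ⟨hq, hqY⟩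
      rw [hp₀] at this
      exact Finset.mem_singleton.mp this
  -- h does not vanish at p₀
  have hhp₀ : ¬ vanishesAt h p₀ := by
    obtain ⟨p, hpX, hp⟩ := part1 i
    rcases hXmem p hpX with rfl | hpY
    · exact hp
    · exact absurd (hhY p hpY) hp
  have hrep : MvPolynomial.eval p₀.rep h ≠ 0 := by
    intro h0
    exact hhp₀ (vanishesAt_of_eval_rep hhom p₀ h0)
  intro g hg hgY
  refine ⟨MvPolynomial.eval p₀.rep g / MvPolynomial.eval p₀.rep h, ?_⟩
  set c : K := MvPolynomial.eval p₀.rep g / MvPolynomial.eval p₀.rep h with hc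
  intro p hpX
  rcases hXmem p hpX with heq | hpY
  · -- vanishes at p₀ by choice of c, using homogeneity
    rw [heq]
    have hsub : (g - c • h).IsHomogeneous (α + i) := by
      have := (homogeneousSubmodule (Fin (n+1)) K (α + i)).sub_mem
        ((mem_homogeneousSubmodule _ _).mpr hg)
        ((homogeneousSubmodule (Fin (n+1)) K (α + i)).smul_mem c
          ((mem_homogeneousSubmodule _ _).mpr hhom))
      exact (mem_homogeneousSubmodule _ _).mp this
    refine vanishesAt_of_eval_rep hsub p₀ ?_
    rw [map_sub, MvPolynomial.smul_eval, div_mul_cancel₀ _ hrep, sub_self]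
  · -- vanishes on Y since both g and h do
    intro v hv hmk
    rw [map_sub, MvPolynomial.smul_eval, hgY p hpY v hv hmk, hhY p hpY v hv hmk,
      mul_zero, sub_zero]
end

section
/- Let X ⊆ P^n be a finite set of points and r ≥ 1. Then X has CBP(r) if and only if there exists an element φ in the graded piece (ω_R)_{−r} of the canonical module of R = P/I_X whose annihilator in R is zero. -/
open MvPolynomial Module

variable {K : Type*} [Field K] [CharZero K] {n : ℕ}

/-- The homogeneous vanishing ideal of `X`. -/
def vanishingIdeal (X : Finset (Proj K n)) : Ideal (MvPolynomial (Fin (n+1)) K) where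
  carrier := {f | ∀ p ∈ X, vanishesAt f p}
  zero_mem' := by intro p _ v _ _; simp
  add_mem' := by
    intro a b ha hb p hp v hv hvp
    have := ha p hp v hv hvp
    have := hb p hp v hv hvp
    simp [vanishesAt] at *
    simp [*]
  smul_mem' := by
    intro c a ha p hp v hv hvp
    have := ha p hp v hv hvp
    simp [smul_eq_mul, *]

/-- The homogeneous coordinate ring `R = P / I_X` of `X`. -/
abbrev coordRing (X : Finset (Proj K n)) :=
  MvPolynomial (Fin (n+1)) K ⧸ vanishingIdeal X

/-- The degree-`m` graded piece of the polynomial ring `K[x₀]` (zero in negative degrees). -/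
noncomputable def polyGrade (K : Type*) [Field K] (m : ℤ) : Submodule K (Polynomial K) :=
  if 0 ≤ m then Submodule.span K {(Polynomial.X : Polynomial K) ^ m.toNat} else ⊥

/-- The degree-`i` graded piece of the canonical module
`ω_R = Hom_{K[x₀]}(R, K[x₀])(−1)`, where `x₀` is the image of the linear form `ℓ`:
a `K[x₀]`-linear map `φ : R → K[x₀]` lies in `(ω_R)_i` iff it maps `R_j` into
`K[x₀]_{j+i−1}` for every `j`. -/
noncomputable def omegaPiece (X : Finset (Proj K n)) (ℓ : MvPolynomial (Fin (n+1)) K)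
    (i : ℤ) : Submodule K (coordRing X →ₗ[K] Polynomial K) where
  carrier := {φ |
    (∀ a : coordRing X,
      φ (Ideal.Quotient.mk (vanishingIdeal X) ℓ * a) = Polynomial.X * φ a) ∧
    ∀ (j : ℕ) (f : MvPolynomial (Fin (n+1)) K), f.IsHomogeneous j →
      φ (Ideal.Quotient.mk (vanishingIdeal X) f) ∈ polyGrade K ((j : ℤ) + i - 1)}
  zero_mem' := by
    refine ⟨fun a => by simp, fun j f hf => by simp⟩
  add_mem' := by
    rintro φ ψ ⟨hφ1, hφ2⟩ ⟨hψ1, hψ2⟩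
    exact ⟨fun a => by simp [hφ1 a, hψ1 a, mul_add],
      fun j f hf => by simpa using (polyGrade K _).add_mem (hφ2 j f hf) (hψ2 j f hf)⟩
  smul_mem' := by
    rintro c φ ⟨h1, h2⟩
    refine ⟨fun a => ?_, fun j f hf => by simpa using (polyGrade K _).smul_mem c (h2 j f hf)⟩
    simp [h1 a, mul_smul_comm]


namespace Stmt7Aux


/-! ### Shift-down operator on polynomials -/

noncomputable def divXL (K : Type*) [Field K] : Polynomial K →ₗ[K] Polynomial K where
  toFun := Polynomial.divX
  map_add' _ _ := Polynomial.divX_add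
  map_smul' c p := by
    ext n
    simp [Polynomial.coeff_divX]

noncomputable def shiftL (K : Type*) [Field K] : ℕ → (Polynomial K →ₗ[K] Polynomial K)
  | 0 => LinearMap.id
  | (N+1) => (shiftL K N).comp (divXL K)

variable {K : Type*} [Field K]

lemma coeff_shiftL (N : ℕ) (p : Polynomial K) (m : ℕ) :
    (shiftL K N p).coeff m = p.coeff (m + N) := by
  induction N generalizing p with
  | zero => simp [shiftL]
  | succ N ih =>
    show ((shiftL K N) (divXL K p)).coeff m = _
    rw [ih]
    show (Polynomial.divX p).coeff (m + N) = _
    rw [Polynomial.coeff_divX, Nat.add_assoc]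

lemma shiftL_X_pow_mul (N : ℕ) (u : Polynomial K) :
    shiftL K N (Polynomial.X ^ N * u) = u := by
  ext m
  rw [coeff_shiftL, Polynomial.coeff_X_pow_mul]

lemma shiftL_X_pow (N j : ℕ) :
    shiftL K N (Polynomial.X ^ j) = if N ≤ j then Polynomial.X ^ (j - N) else 0 := by
  split_ifs with h
  · rw [show (Polynomial.X : Polynomial K) ^ j
        = Polynomial.X ^ N * Polynomial.X ^ (j - N) by rw [← pow_add]; congr 1; omega]
    exact shiftL_X_pow_mul N _
  · ext m
    rw [coeff_shiftL, Polynomial.coeff_X_pow, Polynomial.coeff_zero, if_neg (by omega)]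

lemma shiftL_X_mul (r : ℕ) (u : Polynomial K) :
    shiftL K (r+1) (Polynomial.X * u)
      = Polynomial.X * shiftL K (r+1) u + Polynomial.C (u.coeff r) := by
  ext m
  rcases m with _ | m
  · simp [coeff_shiftL, Polynomial.coeff_X_mul (n := r), Polynomial.mul_coeff_zero]
  · have h1 : m + 1 + (r+1) = (m + (r+1)) + 1 := by omega
    simp [coeff_shiftL, h1, Polynomial.coeff_X_mul, Polynomial.coeff_C]

/-! ### Homogeneous polynomial evaluation lemmas -/

variable {n : ℕ}

lemma degsum {f : MvPolynomial (Fin (n+1)) K} {d : ℕ} (hf : f.IsHomogeneous d)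
    {m : Fin (n+1) →₀ ℕ} (hm : MvPolynomial.coeff m f ≠ 0) :
    ∑ i ∈ m.support, m i = d := by
  have := hf hm
  simpa [Finsupp.weight_apply, Finsupp.sum] using this

lemma eval_smul_homog {f : MvPolynomial (Fin (n+1)) K} {d : ℕ} (hf : f.IsHomogeneous d)
    (t : K) (v : Fin (n+1) → K) :
    eval (t • v) f = t ^ d * eval v f := by
  rw [eval_eq, eval_eq, Finset.mul_sum]
  refine Finset.sum_congr rfl fun m hm => ?_
  have hdeg := degsum hf (mem_support_iff.mp hm)
  calc MvPolynomial.coeff m f * ∏ i ∈ m.support, (t • v) i ^ m i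
      = MvPolynomial.coeff m f * ∏ i ∈ m.support, (t ^ m i * v i ^ m i) := by
        simp [mul_pow]
    _ = t ^ d * (MvPolynomial.coeff m f * ∏ i ∈ m.support, v i ^ m i) := by
        rw [Finset.prod_mul_distrib, Finset.prod_pow_eq_pow_sum, hdeg]; ring

lemma evalT (w : Fin (n+1) → K) (t : K) (f : MvPolynomial (Fin (n+1)) K) :
    Polynomial.eval t (aeval (fun i => Polynomial.C (w i) * Polynomial.X) f)
      = eval (t • w) f := by
  induction f using MvPolynomial.induction_on with
  | C a => simp
  | add p q hp hq => simp [hp, hq]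
  | mul_X p i hp =>
    simp only [map_mul, aeval_X, Polynomial.eval_mul, Polynomial.eval_C, Polynomial.eval_X,
      eval_X, hp, Pi.smul_apply, smul_eq_mul]
    ring

lemma aevalCX [CharZero K] {f : MvPolynomial (Fin (n+1)) K} {d : ℕ} (hf : f.IsHomogeneous d)
    (w : Fin (n+1) → K) :
    aeval (fun i => Polynomial.C (w i) * Polynomial.X) f
      = Polynomial.C (eval w f) * Polynomial.X ^ d :=
  Polynomial.funext fun t => by
    rw [evalT, eval_smul_homog hf, Polynomial.eval_mul, Polynomial.eval_C,
      Polynomial.eval_pow, Polynomial.eval_X]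
    ring

lemma coeff_T [CharZero K] (w : Fin (n+1) → K) (g : MvPolynomial (Fin (n+1)) K) (r : ℕ) :
    (aeval (fun i => Polynomial.C (w i) * Polynomial.X) g).coeff r
      = eval w (homogeneousComponent r g) := by
  conv_lhs => rw [← sum_homogeneousComponent g, map_sum, Polynomial.finset_sum_coeff]
  rw [Finset.sum_congr rfl (fun i _ => ?_), Finset.sum_ite_eq (Finset.range _) r
    (fun i => eval w (homogeneousComponent i g))]
  · split_ifs with h
    · rfl
    · rw [homogeneousComponent_eq_zero _ _ (by simpa using h), map_zero]
  · rw [aevalCX (homogeneousComponent_isHomogeneous i g)]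
    simp [Polynomial.coeff_X_pow, mul_ite]


variable [CharZero K]

lemma vanishesAt_of_eval {d : ℕ} {f : MvPolynomial (Fin (n+1)) K} (hf : f.IsHomogeneous d)
    {v : Fin (n+1) → K} (hv : v ≠ 0) (h0 : eval v f = 0) :
    vanishesAt f (Projectivization.mk K v hv) := by
  intro w hw hwp
  obtain ⟨a, ha⟩ := (Projectivization.mk_eq_mk_iff K w v hw hv).mp hwp
  rw [← ha, Units.smul_def, eval_smul_homog hf, h0, mul_zero]

lemma exists_linear_sep {p q : Proj K n} (hqp : q ≠ p) :
    ∃ h : MvPolynomial (Fin (n+1)) K, h.IsHomogeneous 1 ∧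
      eval (Projectivization.rep q) h = 0 ∧ eval (Projectivization.rep p) h ≠ 0 := by
  classical
  set vq := Projectivization.rep q with hvq
  set vp := Projectivization.rep p with hvp
  obtain ⟨i₀, hi₀⟩ : ∃ i, vq i ≠ 0 := Function.ne_iff.mp (Projectivization.rep_nonzero q)
  by_cases hall : ∀ j, vq i₀ * vp j - vq j * vp i₀ = 0
  · exfalso
    have hvpc : vp = (vp i₀ / vq i₀) • vq := by
      funext j
      have h := hall j
      have : vp j = vp i₀ / vq i₀ * vq j := by
        field_simp
        linear_combination h
      simpa using this
    have hc : vp i₀ / vq i₀ ≠ 0 := by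
      intro h0
      apply Projectivization.rep_nonzero p
      rw [← hvp, hvpc, h0, zero_smul]
    apply hqp
    conv_lhs => rw [← Projectivization.mk_rep q]
    conv_rhs => rw [← Projectivization.mk_rep p]
    rw [Projectivization.mk_eq_mk_iff]
    have hvpi : vp i₀ ≠ 0 := by
      intro h0; apply hc; rw [h0, zero_div]
    refine ⟨(Units.mk0 _ hc)⁻¹, funext fun j' => ?_⟩
    have h := hall j'
    rw [Units.smul_def]
    simp only [Pi.smul_apply, smul_eq_mul, Units.val_inv_eq_inv_val, Units.val_mk0]
    field_simp
    linear_combination h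
  · push_neg at hall
    obtain ⟨j, hj⟩ := hall
    refine ⟨C (vq i₀) * X j - C (vq j) * X i₀, ?_, ?_, ?_⟩
    · exact (isHomogeneous_C_mul_X _ _).sub (isHomogeneous_C_mul_X _ _)
    · simp only [map_sub, map_mul, eval_C, eval_X]
      ring
    · simpa using hj

lemma exists_sep (X : Finset (Proj K n)) {p : Proj K n} (hp : p ∈ X) :
    ∃ (D : ℕ) (g : MvPolynomial (Fin (n+1)) K), g.IsHomogeneous D ∧
      (∀ q ∈ X, q ≠ p → eval (Projectivization.rep q) g = 0) ∧
      eval (Projectivization.rep p) g ≠ 0 := by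
  classical
  choose h hh h0 hne using fun (q : Proj K n) (hqp : q ≠ p) => exists_linear_sep (K := K) hqp
  refine ⟨(X.erase p).attach.card,
    ∏ q ∈ (X.erase p).attach, h ↑q (Finset.mem_erase.mp q.2).1, ?_, ?_, ?_⟩
  · have := MvPolynomial.IsHomogeneous.prod (X.erase p).attach
      (fun q => h ↑q (Finset.mem_erase.mp q.2).1) (fun _ => 1)
      (fun q _ => hh ↑q (Finset.mem_erase.mp q.2).1)
    simpa using this
  · intro q hq hqp
    rw [map_prod]
    exact Finset.prod_eq_zero
      (Finset.mem_attach _ ⟨q, Finset.mem_erase.mpr ⟨hqp, hq⟩⟩) (h0 q hqp)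
  · rw [map_prod]
    rw [Finset.prod_ne_zero_iff]
    exact fun q _ => hne ↑q (Finset.mem_erase.mp q.2).1

/-- The evaluation linear map at a family of representatives. -/
noncomputable def evLin (X : Finset (Proj K n)) (v : Proj K n → (Fin (n+1) → K)) :
    MvPolynomial (Fin (n+1)) K →ₗ[K] (↥X → K) where
  toFun f q := eval (v ↑q) f
  map_add' a b := by funext q; simp
  map_smul' c a := by funext q; simp [MvPolynomial.smul_eval]

@[simp] lemma evLin_apply (X : Finset (Proj K n)) (v : Proj K n → (Fin (n+1) → K))
    (f : MvPolynomial (Fin (n+1)) K) (q : ↥X) : evLin X v f q = eval (v ↑q) f := rfl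

/-- The linear map underlying the canonical-module element. -/
noncomputable def PhiMap (X : Finset (Proj K n)) (c : ↥X → K)
    (v : Proj K n → (Fin (n+1) → K)) (r : ℕ) :
    MvPolynomial (Fin (n+1)) K →ₗ[K] Polynomial K where
  toFun f := ∑ q : ↥X, c q • shiftL K (r+1)
    (aeval (fun i => Polynomial.C (v ↑q i) * Polynomial.X) f)
  map_add' a b := by
    simp [map_add, smul_add, Finset.sum_add_distrib]
  map_smul' t a := by
    simp only [map_smul, RingHom.id_apply, Finset.smul_sum]
    exact Finset.sum_congr rfl fun q _ => smul_comm _ _ _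

@[simp] lemma PhiMap_apply (X : Finset (Proj K n)) (c : ↥X → K)
    (v : Proj K n → (Fin (n+1) → K)) (r : ℕ) (f : MvPolynomial (Fin (n+1)) K) :
    PhiMap X c v r f = ∑ q : ↥X, c q • shiftL K (r+1)
      (aeval (fun i => Polynomial.C (v ↑q i) * Polynomial.X) f) := rfl

end Stmt7Aux

set_option maxHeartbeats 2000000 in
/-- For `r ≥ 1`, `X` has `CBP(r)` iff there is an element `φ` of the graded
piece `(ω_R)_{−r}` of the canonical module whose annihilator in `R` is zero. -/
theorem stmt7 (r : ℕ) (hr : 1 ≤ r) (X : Finset (Proj K n))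
    (ℓ : MvPolynomial (Fin (n+1)) K) (hℓ : ℓ.IsHomogeneous 1)
    (hnzd : ∀ a : coordRing X, Ideal.Quotient.mk (vanishingIdeal X) ℓ * a = 0 → a = 0) :
    hasCBP X r ↔
      ∃ φ ∈ omegaPiece X ℓ (-(r : ℤ)),
        ∀ a : coordRing X, (∀ b : coordRing X, φ (a * b) = 0) → a = 0 := by
  classical
  -- ### Step A: ℓ does not vanish at any point of X
  have hrepℓ : ∀ p ∈ X, eval (Projectivization.rep p) ℓ ≠ 0 := by
    intro p hp hl0
    obtain ⟨D, g, hg, hgz, hgp⟩ := Stmt7Aux.exists_sep X hp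
    have hmkg : Ideal.Quotient.mk (vanishingIdeal X) g ≠ 0 := by
      rw [Ne, Ideal.Quotient.eq_zero_iff_mem]
      intro hmem
      exact hgp ((hmem p hp) _ (Projectivization.rep_nonzero p) (Projectivization.mk_rep p))
    apply hmkg
    apply hnzd
    rw [← map_mul, Ideal.Quotient.eq_zero_iff_mem]
    intro q hq
    by_cases hqp : q = p
    · subst hqp
      have hvl : vanishesAt ℓ q := by
        have := Stmt7Aux.vanishesAt_of_eval hℓ (Projectivization.rep_nonzero q) hl0
        rwa [Projectivization.mk_rep] at this
      intro w hw hwq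
      rw [map_mul, hvl w hw hwq, zero_mul]
    · have hvg : vanishesAt g q := by
        have := Stmt7Aux.vanishesAt_of_eval hg (Projectivization.rep_nonzero q) (hgz q hq hqp)
        rwa [Projectivization.mk_rep] at this
      intro w hw hwq
      rw [map_mul, hvg w hw hwq, mul_zero]
  -- ### Step B: normalized representatives
  set v : Proj K n → (Fin (n+1) → K) :=
    fun p => (eval (Projectivization.rep p) ℓ)⁻¹ • Projectivization.rep p with hv
  have hv0 : ∀ p ∈ X, v p ≠ 0 := fun p hp =>
    smul_ne_zero (inv_ne_zero (hrepℓ p hp)) (Projectivization.rep_nonzero p)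
  have hvmk : ∀ (p) (hp : p ∈ X), Projectivization.mk K (v p) (hv0 p hp) = p := by
    intro p hp
    conv_rhs => rw [← Projectivization.mk_rep p]
    rw [Projectivization.mk_eq_mk_iff]
    exact ⟨Units.mk0 _ (inv_ne_zero (hrepℓ p hp)), rfl⟩
  have hvℓ : ∀ p ∈ X, eval (v p) ℓ = 1 := by
    intro p hp
    rw [hv]
    rw [Stmt7Aux.eval_smul_homog hℓ, pow_one]
    exact inv_mul_cancel₀ (hrepℓ p hp)
  -- vanishing from values at the normalized representatives
  have hQ1 : ∀ {d : ℕ} {f : MvPolynomial (Fin (n+1)) K}, f.IsHomogeneous d →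
      (∀ p ∈ X, eval (v p) f = 0) → f ∈ vanishingIdeal X := by
    intro d f hf hvals q hq
    have := Stmt7Aux.vanishesAt_of_eval hf (hv0 q hq) (hvals q hq)
    rwa [hvmk q hq] at this
  have hEV : ∀ {f : MvPolynomial (Fin (n+1)) K} {q : Proj K n}, q ∈ X → vanishesAt f q →
      eval (v q) f = 0 :=
    fun {f q} hq hvan => hvan (v q) (hv0 q hq) (hvmk q hq)
  constructor
  · -- ### Forward direction: CBP(r) → existence of φ
    intro hCBP
    set V : Submodule K (↥X → K) :=
      (homogeneousSubmodule (Fin (n+1)) K r).map (Stmt7Aux.evLin X v) with hV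
    have step1 : ∀ q : ↥X, ∃ lam : (↥X → K) →ₗ[K] K,
        (∀ w ∈ V, lam w = 0) ∧ lam (Pi.single q 1) ≠ 0 := by
      intro q
      have hq : (Pi.single q (1:K)) ∉ V := by
        rintro ⟨h, hh, hval⟩
        rw [SetLike.mem_coe, mem_homogeneousSubmodule] at hh
        have hvp : eval (v ↑q) h = 1 := by
          have := congrFun hval q
          simpa using this
        have hvan : vanishesAt h ↑q := by
          refine hCBP ↑q q.2 h hh ?_
          intro q' hq' hne'
          have hval0 : eval (v q') h = 0 := by
            have h1 := congrFun hval ⟨q', hq'⟩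
            have h2 : (⟨q', hq'⟩ : ↥X) ≠ q := fun hx => hne' (by rw [← hx])
            simpa [Pi.single_apply, h2] using h1
          have := Stmt7Aux.vanishesAt_of_eval hh (hv0 q' hq') hval0
          rwa [hvmk q' hq'] at this
        exact one_ne_zero (hvp ▸ hEV q.2 hvan)
      have hπ : V.mkQ (Pi.single q 1) ≠ 0 := by
        rw [Submodule.mkQ_apply, Ne, Submodule.Quotient.mk_eq_zero]
        exact hq
      have hex : ¬ ∀ ψ : Module.Dual K ((↥X → K) ⧸ V), ψ (V.mkQ (Pi.single q 1)) = 0 := by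
        rw [Module.forall_dual_apply_eq_zero_iff K]
        exact hπ
      push_neg at hex
      obtain ⟨ψ, hψ⟩ := hex
      refine ⟨ψ.comp V.mkQ, fun w hw => ?_, hψ⟩
      have hw0 : V.mkQ w = 0 := by
        rw [Submodule.mkQ_apply, Submodule.Quotient.mk_eq_zero]
        exact hw
      simp [hw0]
    choose lam hlamV hlam1 using step1
    -- combine the functionals into one with all coefficients nonzero
    set k : ↥X → ℕ := fun q => ((Fintype.equivFin ↥X) q : ℕ) with hk
    have hkinj : Function.Injective k := fun a b hab =>
      (Fintype.equivFin ↥X).injective (Fin.val_injective hab)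
    set Pq : ↥X → Polynomial K :=
      fun q => ∑ p : ↥X, Polynomial.C (lam p (Pi.single q 1)) * Polynomial.X ^ (k p) with hPqdef
    have hPq : ∀ q, Pq q ≠ 0 := by
      intro q hzero
      have hcoeff : (Pq q).coeff (k q) = lam q (Pi.single q 1) := by
        rw [hPqdef]
        rw [Polynomial.finset_sum_coeff]
        rw [Finset.sum_eq_single q]
        · simp [Polynomial.coeff_X_pow]
        · intro p _ hpq
          have hne : k q ≠ k p := fun hx => hpq (hkinj hx.symm)
          simp [Polynomial.coeff_X_pow, hne]
        · intro hnot
          exact absurd (Finset.mem_univ q) hnot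
      rw [hzero, Polynomial.coeff_zero] at hcoeff
      exact hlam1 q hcoeff.symm
    obtain ⟨t₀, ht₀⟩ := Infinite.exists_notMem_finset
      (Finset.univ.biUnion fun q : ↥X => (Pq q).roots.toFinset)
    have hPqt : ∀ q : ↥X, Polynomial.eval t₀ (Pq q) ≠ 0 := by
      intro q h0
      exact ht₀ (Finset.mem_biUnion.mpr ⟨q, Finset.mem_univ q,
        Multiset.mem_toFinset.mpr ((Polynomial.mem_roots (hPq q)).mpr h0)⟩)
    set c₀ : ↥X → K := fun q => Polynomial.eval t₀ (Pq q) with hc₀def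
    have hc₀ : ∀ q, c₀ q ≠ 0 := hPqt
    have hc₀eval : ∀ q, c₀ q = ∑ p : ↥X, lam p (Pi.single q 1) * t₀ ^ (k p) := by
      intro q
      simp [hc₀def, hPqdef, Polynomial.eval_finset_sum]
    -- property (A): the functional kills degree-r values
    have hA : ∀ h : MvPolynomial (Fin (n+1)) K, h.IsHomogeneous r →
        ∑ q : ↥X, c₀ q * eval (v ↑q) h = 0 := by
      intro h hh
      have hApt : ∀ p : ↥X, ∑ q : ↥X, lam p (Pi.single q 1) * eval (v ↑q) h = 0 := by
        intro p
        have hsum : (∑ q : ↥X, eval (v ↑q) h • (Pi.single q 1 : ↥X → K)) = Stmt7Aux.evLin X v h := by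
          funext j
          simp [Finset.sum_apply, Pi.single_apply, mul_ite]
        have h2 : lam p (Stmt7Aux.evLin X v h) = 0 :=
          hlamV p _ ⟨h, (mem_homogeneousSubmodule _ _).mpr hh, rfl⟩
        calc ∑ q : ↥X, lam p (Pi.single q 1) * eval (v ↑q) h
            = ∑ q : ↥X, lam p (eval (v ↑q) h • (Pi.single q 1 : ↥X → K)) := by
              refine Finset.sum_congr rfl fun q _ => ?_
              rw [map_smul, smul_eq_mul, mul_comm]
          _ = lam p (∑ q : ↥X, eval (v ↑q) h • (Pi.single q 1 : ↥X → K)) := (map_sum _ _ _).symm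
          _ = 0 := by rw [hsum, h2]
      have expand : ∀ q : ↥X, c₀ q * eval (v ↑q) h
          = ∑ p : ↥X, (lam p (Pi.single q 1) * eval (v ↑q) h) * t₀ ^ (k p) := by
        intro q
        rw [hc₀eval, Finset.sum_mul]
        exact Finset.sum_congr rfl fun p _ => by ring
      rw [Finset.sum_congr rfl fun q _ => expand q, Finset.sum_comm]
      refine Finset.sum_eq_zero fun p _ => ?_
      rw [← Finset.sum_mul, hApt p, zero_mul]
    -- the linear map on the polynomial ring kills the vanishing ideal
    have hΦI : ∀ f ∈ vanishingIdeal X, Stmt7Aux.PhiMap X c₀ v r f = 0 := by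
      intro f hf
      have hT : ∀ q : ↥X,
          aeval (fun i => Polynomial.C (v ↑q i) * Polynomial.X) f = 0 := by
        intro q
        apply Polynomial.eq_zero_of_infinite_isRoot
        apply Set.Infinite.mono (s := ({(0:K)}ᶜ : Set K))
        · intro t ht
          have htne : (t:K) ≠ 0 := ht
          have hne : t • v ↑q ≠ 0 := smul_ne_zero htne (hv0 _ q.2)
          have hrep : Projectivization.mk K (t • v ↑q) hne = ↑q := by
            have h1 : Projectivization.mk K (t • v ↑q) hne
                = Projectivization.mk K (v ↑q) (hv0 _ q.2) :=
              (Projectivization.mk_eq_mk_iff K _ _ _ _).mpr ⟨Units.mk0 t htne, rfl⟩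
            rw [h1, hvmk _ q.2]
          have hval := hf ↑q q.2 (t • v ↑q) hne hrep
          show Polynomial.IsRoot _ t
          rw [Polynomial.IsRoot, Stmt7Aux.evalT]
          exact hval
        · exact (Set.finite_singleton (0:K)).infinite_compl
      rw [Stmt7Aux.PhiMap_apply]
      simp [hT]
    have hle : (vanishingIdeal X).restrictScalars K ≤ LinearMap.ker (Stmt7Aux.PhiMap X c₀ v r) :=
      fun f hf => by rw [LinearMap.mem_ker]; exact hΦI f hf
    have hφmk : ∀ f, ((Submodule.liftQ _ (Stmt7Aux.PhiMap X c₀ v r) hle).comp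
        (Submodule.Quotient.restrictScalarsEquiv K (vanishingIdeal X)).symm.toLinearMap)
        (Ideal.Quotient.mk (vanishingIdeal X) f) = Stmt7Aux.PhiMap X c₀ v r f := fun f => rfl
    have hTl : ∀ q : ↥X,
        aeval (fun i => Polynomial.C (v ↑q i) * Polynomial.X) ℓ = Polynomial.X := by
      intro q
      rw [Stmt7Aux.aevalCX hℓ, hvℓ _ q.2]
      simp
    refine ⟨(Submodule.liftQ _ (Stmt7Aux.PhiMap X c₀ v r) hle).comp
        (Submodule.Quotient.restrictScalarsEquiv K (vanishingIdeal X)).symm.toLinearMap,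
      ⟨?_, ?_⟩, ?_⟩
    · -- compatibility with multiplication by ℓ
      intro a
      obtain ⟨g, rfl⟩ := Ideal.Quotient.mk_surjective a
      rw [← map_mul, hφmk, hφmk]
      rw [Stmt7Aux.PhiMap_apply, Stmt7Aux.PhiMap_apply]
      calc ∑ q : ↥X, c₀ q • Stmt7Aux.shiftL K (r+1)
            (aeval (fun i => Polynomial.C (v ↑q i) * Polynomial.X) (ℓ * g))
          = ∑ q : ↥X, (Polynomial.X * (c₀ q • Stmt7Aux.shiftL K (r+1)
              (aeval (fun i => Polynomial.C (v ↑q i) * Polynomial.X) g))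
            + Polynomial.C (c₀ q * (aeval (fun i => Polynomial.C (v ↑q i) * Polynomial.X) g).coeff r)) := by
            refine Finset.sum_congr rfl fun q _ => ?_
            rw [map_mul, hTl q, Stmt7Aux.shiftL_X_mul, smul_add]
            rw [mul_smul_comm]
            congr 1
            rw [Polynomial.smul_C, smul_eq_mul]
        _ = Polynomial.X * (∑ q : ↥X, c₀ q • Stmt7Aux.shiftL K (r+1)
              (aeval (fun i => Polynomial.C (v ↑q i) * Polynomial.X) g))
            + Polynomial.C (∑ q : ↥X, c₀ q * (aeval (fun i => Polynomial.C (v ↑q i) * Polynomial.X) g).coeff r) := by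
            rw [Finset.sum_add_distrib, ← Finset.mul_sum, ← map_sum]
        _ = Polynomial.X * ∑ q : ↥X, c₀ q • Stmt7Aux.shiftL K (r+1)
              (aeval (fun i => Polynomial.C (v ↑q i) * Polynomial.X) g) := by
            have hz : ∑ q : ↥X, c₀ q * (aeval (fun i => Polynomial.C (v ↑q i) * Polynomial.X) g).coeff r = 0 := by
              rw [Finset.sum_congr rfl fun q _ => by rw [Stmt7Aux.coeff_T]]
              exact hA _ (homogeneousComponent_isHomogeneous r g)
            rw [hz, Polynomial.C_0, add_zero]
    · -- graded piece condition
      intro j f hf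
      rw [hφmk, Stmt7Aux.PhiMap_apply]
      have hTf : ∀ q : ↥X, aeval (fun i => Polynomial.C (v ↑q i) * Polynomial.X) f
          = Polynomial.C (eval (v ↑q) f) * Polynomial.X ^ j := fun q => Stmt7Aux.aevalCX hf _
      by_cases hj : r + 1 ≤ j
      · have hpg : polyGrade K ((j:ℤ) + -(r:ℤ) - 1)
            = Submodule.span K {(Polynomial.X : Polynomial K) ^ (j - (r+1))} := by
          have htn : ((j:ℤ) + -(r:ℤ) - 1).toNat = j - (r+1) := by omega
          rw [polyGrade, if_pos (by omega), htn]
        rw [hpg]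
        apply Submodule.sum_mem
        intro q _
        rw [hTf q, ← Polynomial.smul_eq_C_mul, map_smul, Stmt7Aux.shiftL_X_pow, if_pos hj]
        exact Submodule.smul_mem _ _ (Submodule.smul_mem _ _ (Submodule.mem_span_singleton_self _))
      · have hzero : ∀ q : ↥X, Stmt7Aux.shiftL K (r+1)
            (aeval (fun i => Polynomial.C (v ↑q i) * Polynomial.X) f) = 0 := by
          intro q
          rw [hTf q, ← Polynomial.smul_eq_C_mul, map_smul, Stmt7Aux.shiftL_X_pow, if_neg hj,
            smul_zero]
        rw [Finset.sum_congr rfl fun q _ => by rw [hzero q, smul_zero]]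
        simpa using Submodule.zero_mem (polyGrade K ((j:ℤ) + -(r:ℤ) - 1))
    · -- trivial annihilator
      intro a ha
      obtain ⟨f, rfl⟩ := Ideal.Quotient.mk_surjective a
      rw [Ideal.Quotient.eq_zero_iff_mem]
      intro p hp
      obtain ⟨D, g, hg, hgz, hgp⟩ := Stmt7Aux.exists_sep X hp
      have hgvq : ∀ q ∈ X, q ≠ p → eval (v q) g = 0 := by
        intro q hq hqp
        rw [hv, Stmt7Aux.eval_smul_homog hg, hgz q hq hqp, mul_zero]
      have hgvp : eval (v p) g ≠ 0 := by
        rw [hv, Stmt7Aux.eval_smul_homog hg]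
        exact mul_ne_zero (pow_ne_zero _ (inv_ne_zero (hrepℓ p hp))) hgp
      have hzero := ha (Ideal.Quotient.mk (vanishingIdeal X) (ℓ ^ (r+1) * g))
      rw [← map_mul, hφmk, Stmt7Aux.PhiMap_apply] at hzero
      have hTq : ∀ q : ↥X, aeval (fun i => Polynomial.C (v ↑q i) * Polynomial.X) (f * (ℓ ^ (r+1) * g))
          = Polynomial.X ^ (r+1) * (Polynomial.C (eval (v ↑q) g)
            * (Polynomial.X ^ D * aeval (fun i => Polynomial.C (v ↑q i) * Polynomial.X) f)) := by
        intro q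
        rw [map_mul, map_mul, map_pow, hTl q, Stmt7Aux.aevalCX hg]
        ring
      rw [Finset.sum_eq_single (⟨p, hp⟩ : ↥X)] at hzero
      rotate_left
      · intro q _ hqp
        have hqp' : (q : Proj K n) ≠ p := fun hx => hqp (Subtype.ext hx)
        rw [hTq q, hgvq ↑q q.2 hqp']
        simp
      · intro hnot
        exact absurd (Finset.mem_univ _) hnot
      rw [hTq, Stmt7Aux.shiftL_X_pow_mul] at hzero
      have hT0 : aeval (fun i => Polynomial.C (v p i) * Polynomial.X) f = 0 := by
        have h1 := (smul_eq_zero.mp hzero).resolve_left (hc₀ ⟨p, hp⟩)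
        rcases mul_eq_zero.mp h1 with h | h
        · exact absurd (Polynomial.C_eq_zero.mp h) hgvp
        rcases mul_eq_zero.mp h with h | h
        · exact absurd h (pow_ne_zero _ Polynomial.X_ne_zero)
        · exact h
      intro w hw hwp
      have hmkw : Projectivization.mk K w hw = Projectivization.mk K (v p) (hv0 p hp) := by
        rw [hwp, hvmk p hp]
      obtain ⟨t, ht⟩ := (Projectivization.mk_eq_mk_iff K w (v p) hw (hv0 p hp)).mp hmkw
      rw [← ht, Units.smul_def, ← Stmt7Aux.evalT, hT0, Polynomial.eval_zero]
  · -- ### Backward direction: existence of φ → CBP(r)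
    rintro ⟨φ, ⟨hcompat, hgrade⟩, hann⟩ p hp f hf hvan
    rcases eq_or_ne (eval (v p) f) 0 with h0 | hne
    · have := Stmt7Aux.vanishesAt_of_eval hf (hv0 p hp) h0
      rwa [hvmk p hp] at this
    · exfalso
      have hφf : φ (Ideal.Quotient.mk (vanishingIdeal X) f) = 0 := by
        have hmem := hgrade r f hf
        rw [show ((r:ℤ) + -(r:ℤ) - 1) = -1 by ring] at hmem
        rw [show polyGrade K (-1) = ⊥ from if_neg (by norm_num)] at hmem
        simpa using hmem
      have hpow : ∀ (m : ℕ) (x : coordRing X),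
          φ (Ideal.Quotient.mk (vanishingIdeal X) ℓ ^ m * x) = Polynomial.X ^ m * φ x := by
        intro m
        induction m with
        | zero => intro x; simp
        | succ m ih =>
          intro x
          have h1 : Ideal.Quotient.mk (vanishingIdeal X) ℓ ^ (m+1) * x
              = Ideal.Quotient.mk (vanishingIdeal X) ℓ ^ m
                * (Ideal.Quotient.mk (vanishingIdeal X) ℓ * x) := by ring
          rw [h1, ih (Ideal.Quotient.mk (vanishingIdeal X) ℓ * x), hcompat x, pow_succ]
          ring
      have hmkf : Ideal.Quotient.mk (vanishingIdeal X) f ≠ 0 := by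
        rw [Ne, Ideal.Quotient.eq_zero_iff_mem]
        intro hmem
        exact hne (hEV hp (hmem p hp))
      apply hmkf
      apply hann
      intro b
      obtain ⟨g, rfl⟩ := Ideal.Quotient.mk_surjective b
      rw [← map_mul]
      rw [show f * g = ∑ i ∈ Finset.range (g.totalDegree+1), f * homogeneousComponent i g by
        rw [← Finset.mul_sum, sum_homogeneousComponent]]
      rw [map_sum, map_sum]
      apply Finset.sum_eq_zero
      intro m _
      have hcomp := homogeneousComponent_isHomogeneous m g
      set c := eval (v p) (homogeneousComponent m g) with hc
      have key : Ideal.Quotient.mk (vanishingIdeal X) (f * homogeneousComponent m g)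
          = Ideal.Quotient.mk (vanishingIdeal X) (C c * (f * ℓ ^ m)) := by
        rw [Ideal.Quotient.eq]
        refine hQ1 ((hf.mul hcomp).sub (((hf.mul (by simpa using hℓ.pow m))).C_mul c)) ?_
        intro q hq
        rw [map_sub, map_mul, map_mul, map_mul, eval_C, map_pow]
        by_cases hqp : q = p
        · subst hqp
          rw [hvℓ q hq, one_pow, hc]
          ring
        · have hfq : eval (v q) f = 0 := hEV hq (hvan q hq hqp)
          rw [hfq]
          ring
      rw [key]
      have hsm : Ideal.Quotient.mk (vanishingIdeal X) (C c * (f * ℓ ^ m))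
          = c • Ideal.Quotient.mk (vanishingIdeal X) (f * ℓ ^ m) := by
        rw [← MvPolynomial.smul_eq_C_mul]
        rfl
      rw [hsm, map_smul]
      have hmm : Ideal.Quotient.mk (vanishingIdeal X) (f * ℓ ^ m)
          = Ideal.Quotient.mk (vanishingIdeal X) ℓ ^ m
            * Ideal.Quotient.mk (vanishingIdeal X) f := by
        rw [map_mul, map_pow, mul_comm]
      rw [hmm, hpow m, hφf, mul_zero, smul_zero]
end
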